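/- arXiv:1410.0621 — 5 statements merged into one kernel-verified Lean document; each statement's English description precedes it below -/
import Mathlib

section
/- Let λ_3, λ_4, …, λ_n, λ_1 ∈ ℂ² (indices cyclic mod n) be spinors with all consecutive angle brackets ⟨i,i+1⟩ ≠ 0, and let Q be the (n−2)×(n−2) symmetric tridiagonal matrix with rows/columns indexed by i = 3,…,n, diagonal entries Q_{ii} = ⟨i+1,i−1⟩/(⟨i−1,i⟩⟨i,i+1⟩) (with indices mod n) and off-diagonal entries Q_{i,i+1} = Q_{i+1,i} = 1/⟨i,i+1⟩, all other entries zero. Then det Q = ± ⟨12⟩ / (⟨23⟩⟨34⟩⋯⟨n−1,n⟩⟨n1⟩); in particular |det Q| = ⟨12⟩² / (⟨12⟩⟨23⟩⋯⟨n1⟩). -/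
/-- The angle bracket `⟨ij⟩ = λ_i^1 λ_j^2 - λ_i^2 λ_j^1`, for spinors indexed cyclically. -/
def ang {n : ℕ} (lam : ZMod n → Fin 2 → ℂ) (i j : ZMod n) : ℂ :=
  lam i 0 * lam j 1 - lam i 1 * lam j 0

/-- The label (in `ZMod n`) of the `k`-th row/column of the matrix `Q`, whose rows and columns
are indexed by particle labels `3, …, n`. -/
def lbl {n : ℕ} (k : Fin (n - 2)) : ZMod n := ((k : ℕ) + 3 : ℕ)

/-- The `(n-2) × (n-2)` symmetric tridiagonal matrix `Q` with rows/columns indexed by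
`i = 3, …, n`, diagonal entries `Q_{ii} = ⟨i+1,i−1⟩/(⟨i−1,i⟩⟨i,i+1⟩)` (indices mod `n`) and
off-diagonal entries `Q_{i,i+1} = Q_{i+1,i} = 1/⟨i,i+1⟩`. -/
noncomputable def Qmat {n : ℕ} (lam : ZMod n → Fin 2 → ℂ) :
    Matrix (Fin (n - 2)) (Fin (n - 2)) ℂ :=
  Matrix.of fun i j =>
    if i = j then
      ang lam (lbl i + 1) (lbl i - 1) / (ang lam (lbl i - 1) (lbl i) * ang lam (lbl i) (lbl i + 1))
    else if (j : ℕ) = (i : ℕ) + 1 then 1 / ang lam (lbl i) (lbl i + 1)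
    else if (i : ℕ) = (j : ℕ) + 1 then 1 / ang lam (lbl j) (lbl j + 1)
    else 0

/-!
`Q` is tridiagonal, so its leading principal minors `D m` obey the continuant recursion
`D (m + 2) = Q_{m+1,m+1} D (m + 1) - Q_{m,m+1}² D m`. By the Schouten identity this recursion is
solved by `D m = (-1)^m ⟨2, m+3⟩ / (⟨23⟩⟨34⟩⋯⟨m+2, m+3⟩)`, and for `m = n - 2` the label `m + 3`
wraps around to `1`.
-/

open Finset

section Tridiagonal

variable {R : Type*} [CommRing R]

def tridiag (d o : ℕ → R) (m : ℕ) : Matrix (Fin m) (Fin m) R :=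
  Matrix.of fun i j =>
    if (i : ℕ) = j then d i
    else if (j : ℕ) = i + 1 then o i
    else if (i : ℕ) = j + 1 then o j
    else 0

lemma tridiag_submatrix_castSucc (d o : ℕ → R) (m : ℕ) :
    (tridiag d o (m + 1)).submatrix Fin.castSucc Fin.castSucc = tridiag d o m := by
  ext i j
  simp [tridiag]

lemma det_tridiag_add_two (d o : ℕ → R) (m : ℕ) :
    (tridiag d o (m + 2)).det =
      d (m + 1) * (tridiag d o (m + 1)).det - o m ^ 2 * (tridiag d o m).det := by
  set A := tridiag d o (m + 2)
  have hrow : ∀ k : Fin m, A (Fin.last _) k.castSucc.castSucc = 0 := by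
    intro k
    have := k.isLt
    simp only [A, tridiag, Matrix.of_apply, Fin.val_last, Fin.val_castSucc]
    rw [if_neg (by omega), if_neg (by omega), if_neg (by omega)]
  have hminor_off : (A.submatrix Fin.castSucc (Fin.last m).castSucc.succAbove).det =
      o m * (tridiag d o m).det := by
    set B := A.submatrix Fin.castSucc (Fin.last m).castSucc.succAbove
    have hcol : ∀ k : Fin m, B k.castSucc (Fin.last m) = 0 := by
      intro k
      have := k.isLt
      simp only [B, A, tridiag, Matrix.of_apply, Matrix.submatrix_apply,
        Fin.succAbove_castSucc_self, Fin.val_succ, Fin.val_last, Fin.val_castSucc]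
      rw [if_neg (by omega), if_neg (by omega), if_neg (by omega)]
    have hcorner : B (Fin.last m) (Fin.last m) = o m := by
      simp [B, A, tridiag]
    have hminor : B.submatrix Fin.castSucc Fin.castSucc = tridiag d o m := by
      ext i j
      simp [B, A, tridiag]
    rw [Matrix.det_succ_column B (Fin.last m), Fin.sum_univ_castSucc]
    simp [hcol, hcorner, hminor]
  have hdiag : A (Fin.last _) (Fin.last _) = d (m + 1) := by simp [A, tridiag]
  have hoff : A (Fin.last _) (Fin.last m).castSucc = o m := by
    simp only [A, tridiag, Matrix.of_apply, Fin.val_last, Fin.val_castSucc]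
    rw [if_neg (by omega), if_neg (by omega), if_true]
  rw [Matrix.det_succ_row A (Fin.last _), Fin.sum_univ_castSucc, Fin.sum_univ_castSucc]
  simp only [Fin.val_last, Fin.val_castSucc, hrow, mul_zero, zero_mul, sum_const_zero,
    Fin.succAbove_last, odd_add_one_self, Odd.neg_one_pow, hoff, neg_mul, one_mul, hminor_off,
    zero_add, Even.add_self, Even.neg_pow, one_pow, hdiag, tridiag_submatrix_castSucc, A]
  ring

end Tridiagonal

lemma prod_zmod_eq_prod_range_add {M : Type*} [CommMonoid M] {n : ℕ} [NeZero n]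
    (f : ZMod n → M) (a : ZMod n) : ∏ i, f i = ∏ j ∈ range n, f (j + a) := by
  obtain ⟨m, rfl⟩ : ∃ m, n = m + 1 := Nat.exists_eq_succ_of_ne_zero (NeZero.ne n)
  rw [← Equiv.prod_comp (Equiv.addRight a), ← Fin.prod_univ_eq_prod_range (fun j ↦ f (j + a))]
  exact prod_congr rfl fun i _ ↦ congrArg (fun x ↦ f (x + a)) (ZMod.natCast_zmod_val i).symm

section Spinors

variable {n : ℕ} (lam : ZMod n → Fin 2 → ℂ)

lemma ang_swap (i j : ZMod n) : ang lam i j = -ang lam j i := by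
  simp only [ang]; ring

lemma ang_schouten (i j k l : ZMod n) :
    ang lam i j * ang lam k l + ang lam i k * ang lam l j + ang lam i l * ang lam j k = 0 := by
  simp only [ang]; ring

lemma det_tridiag_ang (p : ℕ → ZMod n) (hp : ∀ k, ang lam (p k) (p (k + 1)) ≠ 0) (m : ℕ) :
    (tridiag (fun k ↦ ang lam (p (k + 2)) (p k) /
          (ang lam (p k) (p (k + 1)) * ang lam (p (k + 1)) (p (k + 2))))
        (fun k ↦ 1 / ang lam (p (k + 1)) (p (k + 2))) m).det =
      (-1) ^ m * ang lam (p 0) (p (m + 1)) / ∏ j ∈ range (m + 1), ang lam (p j) (p (j + 1)) := by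
  induction m using Nat.twoStepInduction with
  | zero => simp [div_self (hp 0)]
  | one =>
    rw [Matrix.det_fin_one]
    simp [tridiag, prod_range_succ, ang_swap lam (p 2) (p 0)]
  | more m ih₀ ih₁ =>
    have h₀ : ∏ j ∈ range (m + 1), ang lam (p j) (p (j + 1)) ≠ 0 :=
      prod_ne_zero_iff.mpr fun j _ ↦ hp j
    have h₁ : ang lam (p (m + 1)) (p (m + 2)) ≠ 0 := hp (m + 1)
    have h₂ : ang lam (p (m + 2)) (p (m + 3)) ≠ 0 := hp (m + 2)
    rw [det_tridiag_add_two, ih₀, ih₁, prod_range_succ _ (m + 2), prod_range_succ _ (m + 1)]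
    simp only [pow_succ, Nat.add_assoc, Nat.reduceAdd]
    field_simp
    linear_combination -ang_schouten lam (p 0) (p (m + 1)) (p (m + 2)) (p (m + 3))

lemma Qmat_eq_tridiag :
    Qmat lam = tridiag (fun k ↦ ang lam ((k + 4 : ℕ) : ZMod n) ((k + 2 : ℕ) : ZMod n) /
          (ang lam ((k + 2 : ℕ) : ZMod n) ((k + 3 : ℕ) : ZMod n) *
            ang lam ((k + 3 : ℕ) : ZMod n) ((k + 4 : ℕ) : ZMod n)))
        (fun k ↦ 1 / ang lam ((k + 3 : ℕ) : ZMod n) ((k + 4 : ℕ) : ZMod n)) (n - 2) := by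
  have hsucc (k : Fin (n - 2)) : lbl k + 1 = (((k : ℕ) + 4 : ℕ) : ZMod n) := by
    simp only [lbl]; push_cast; ring
  have hpred (k : Fin (n - 2)) : lbl k - 1 = (((k : ℕ) + 2 : ℕ) : ZMod n) := by
    simp only [lbl]; push_cast; ring
  ext i j
  simp only [Qmat, tridiag, Matrix.of_apply, Fin.val_inj, hsucc, hpred]
  rfl

lemma prod_ang_add_one [NeZero n] (hn : 2 ≤ n) :
    ∏ i : ZMod n, ang lam i (i + 1) =
      ang lam 1 2 *
        ∏ j ∈ range (n - 1), ang lam ((j + 2 : ℕ) : ZMod n) ((j + 3 : ℕ) : ZMod n) := by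
  obtain ⟨m, rfl⟩ : ∃ m, n = m + 2 := ⟨n - 2, by omega⟩
  have hwrap : ((m + 1 : ℕ) : ZMod (m + 2)) + 2 = 1 := by
    rw [show (2 : ZMod (m + 2)) = 1 + 1 by norm_num, ← add_assoc, ← Nat.cast_add_one,
      ZMod.natCast_self, zero_add]
  rw [prod_zmod_eq_prod_range_add _ 2, prod_range_succ, hwrap, one_add_one_eq_two, mul_comm]
  congr 1
  refine prod_congr rfl fun j _ ↦ ?_
  push_cast; ring_nf

lemma det_Qmat_eq (hn : 2 ≤ n) (hang : ∀ i : ZMod n, ang lam i (i + 1) ≠ 0) :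
    (Qmat lam).det = (-1) ^ (n - 1) * (ang lam 1 2 /
      ∏ j ∈ range (n - 1), ang lam ((j + 2 : ℕ) : ZMod n) ((j + 3 : ℕ) : ZMod n)) := by
  obtain ⟨m, rfl⟩ : ∃ m, n = m + 2 := ⟨n - 2, by omega⟩
  have hp (k : ℕ) : ang lam ((k + 2 : ℕ) : ZMod (m + 2)) ((k + 1 + 2 : ℕ) : ZMod (m + 2)) ≠ 0 := by
    convert hang ((k + 2 : ℕ) : ZMod (m + 2)) using 2
    push_cast; ring
  have hwrap : ((m + 1 + 2 : ℕ) : ZMod (m + 2)) = 1 := by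
    rw [show m + 1 + 2 = 1 + (m + 2) by omega, Nat.cast_add, ZMod.natCast_self, add_zero,
      Nat.cast_one]
  rw [show m + 2 - 1 = m + 1 by omega, Qmat_eq_tridiag, Nat.add_sub_cancel,
    det_tridiag_ang lam (fun k ↦ ((k + 2 : ℕ) : ZMod (m + 2))) hp m]
  simp only [hwrap, zero_add, Nat.cast_ofNat, Nat.add_assoc, Nat.reduceAdd]
  rw [ang_swap lam _ 1]
  ring

end Spinors

/-- `det Q = ± ⟨12⟩ / (⟨23⟩⟨34⟩⋯⟨n−1,n⟩⟨n1⟩)`; in particular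
`|det Q| = ⟨12⟩² / (⟨12⟩⟨23⟩⋯⟨n1⟩)`. -/
theorem det_Qmat {n : ℕ} [NeZero n] (hn : 4 ≤ n) (lam : ZMod n → Fin 2 → ℂ)
    (hang : ∀ i : ZMod n, ang lam i (i + 1) ≠ 0) :
    ((Qmat lam).det =
        ang lam 1 2 / ∏ j ∈ Finset.range (n - 1),
          ang lam ((j + 2 : ℕ) : ZMod n) ((j + 3 : ℕ) : ZMod n) ∨
      (Qmat lam).det =
        -(ang lam 1 2 / ∏ j ∈ Finset.range (n - 1),
          ang lam ((j + 2 : ℕ) : ZMod n) ((j + 3 : ℕ) : ZMod n))) ∧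
    ‖(Qmat lam).det‖ =
      ‖(ang lam 1 2) ^ 2 / ∏ i : ZMod n, ang lam i (i + 1)‖ := by
  have hn₂ : 2 ≤ n := by omega
  have h₁₂ : ang lam 1 2 ≠ 0 := by simpa [one_add_one_eq_two] using hang 1
  rw [det_Qmat_eq lam hn₂ hang, prod_ang_add_one lam hn₂]
  refine ⟨?_, ?_⟩
  · rcases neg_one_pow_eq_or ℂ (n - 1) with h | h <;> simp [h]
  · rw [norm_mul, norm_pow, norm_neg, norm_one, one_pow, one_mul, sq, mul_div_mul_left _ _ h₁₂]
end

section
/- For 0 < i < n let Q^{(n−i)} be the i×i lower-right submatrix of the tridiagonal matrix Q^{(2)} above (rows/columns indexed by n−i+1,…,n after the appropriate shift). Then the determinant satisfies the recursion det Q^{(n−m)} = A·det Q^{(n−m+1)} − B²·det Q^{(n−m+2)} with A = ⟨n−m+2,n−m⟩/(⟨n−m,n−m+1⟩⟨n−m+1,n−m+2⟩) and B = 1/⟨n−m+1,n−m+2⟩, and its closed form is det Q^{(n−i)} = (−1)^{i−1} ⟨1,n−i⟩ / (⟨n−i,n−i+1⟩⟨n−i+1,n−i+2⟩⋯⟨n,1⟩).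 -/
/-- `Q^{(m)}`: the `(n-m) × (n-m)` matrix obtained from the symmetric tridiagonal matrix
`Q^{(0)}` (rows and columns indexed by particle labels `1, …, n`, diagonal entry
`⟨i+1,i−1⟩/(⟨i−1,i⟩⟨i,i+1⟩)` at label `i`, off-diagonal entries `1/⟨i,i+1⟩` between labels
`i` and `i+1`) by deleting the first `m` rows and `m` columns, so its rows and columns carry
the labels `m+1, …, n`. -/
noncomputable def Qdel {n : ℕ} (lam : ZMod n → Fin 2 → ℂ) (m : ℕ) :
    Matrix (Fin (n - m)) (Fin (n - m)) ℂ :=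
  Matrix.of fun i j =>
    let li : ZMod n := ((i : ℕ) + m + 1 : ℕ)
    let lj : ZMod n := ((j : ℕ) + m + 1 : ℕ)
    if i = j then
      ang lam (li + 1) (li - 1) / (ang lam (li - 1) li * ang lam li (li + 1))
    else if (j : ℕ) = (i : ℕ) + 1 then 1 / ang lam li (li + 1)
    else if (i : ℕ) = (j : ℕ) + 1 then 1 / ang lam lj (lj + 1)
    else 0

lemma schouten {n : ℕ} (lam : ZMod n → Fin 2 → ℂ) (a b c d : ZMod n) :
    ang lam a b * ang lam c d + ang lam a c * ang lam d b + ang lam a d * ang lam b c = 0 := by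
  simp only [ang]; ring

lemma ang_anti {n : ℕ} (lam : ZMod n → Fin 2 → ℂ) (a b : ZMod n) :
    ang lam a b = - ang lam b a := by
  simp only [ang]; ring

/-- The same tridiagonal family with an explicit size parameter. -/
noncomputable def Ttri {n : ℕ} (lam : ZMod n → Fin 2 → ℂ) (s : ℕ) (sz : ℕ) :
    Matrix (Fin sz) (Fin sz) ℂ :=
  Matrix.of fun i j =>
    let li : ZMod n := ((i : ℕ) + s + 1 : ℕ)
    let lj : ZMod n := ((j : ℕ) + s + 1 : ℕ)
    if i = j then
      ang lam (li + 1) (li - 1) / (ang lam (li - 1) li * ang lam li (li + 1))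
    else if (j : ℕ) = (i : ℕ) + 1 then 1 / ang lam li (li + 1)
    else if (i : ℕ) = (j : ℕ) + 1 then 1 / ang lam lj (lj + 1)
    else 0

lemma Qdel_eq_Ttri {n : ℕ} (lam : ZMod n → Fin 2 → ℂ) (m : ℕ) :
    Qdel lam m = Ttri lam m (n - m) := rfl

lemma det_Ttri_congr {n : ℕ} (lam : ZMod n → Fin 2 → ℂ) (s : ℕ) {a b : ℕ} (h : a = b) :
    (Ttri lam s a).det = (Ttri lam s b).det := by subst h; rfl

lemma det_expand' {sz : ℕ} (M : Matrix (Fin (sz+2)) (Fin (sz+2)) ℂ)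
    (hrow : ∀ j : Fin (sz+2), 2 ≤ (j:ℕ) → M 0 j = 0)
    (hcol : ∀ i : Fin (sz+2), 2 ≤ (i:ℕ) → M i 0 = 0) :
    M.det = M 0 0 * (M.submatrix Fin.succ Fin.succ).det
      - M 0 1 * M 1 0 * (M.submatrix (Fin.succ ∘ Fin.succ) (Fin.succ ∘ Fin.succ)).det := by
  rw [Matrix.det_succ_row_zero, Fin.sum_univ_succ, Fin.sum_univ_succ]
  have hz : ∀ j : Fin sz, M 0 j.succ.succ = 0 := fun j => hrow _ (by simp)
  have h1 : (M.submatrix Fin.succ ((1 : Fin (sz+2)).succAbove)).det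
      = M 1 0 * (M.submatrix (Fin.succ ∘ Fin.succ) (Fin.succ ∘ Fin.succ)).det := by
    rw [Matrix.det_succ_column_zero, Fin.sum_univ_succ]
    have hz2 : ∀ i : Fin sz, (M.submatrix Fin.succ ((1 : Fin (sz+2)).succAbove)) i.succ 0 = 0 := by
      intro i
      simp only [Matrix.submatrix_apply]
      have : (1 : Fin (sz+2)).succAbove 0 = 0 := rfl
      rw [this]
      exact hcol _ (by simp)
    rw [Finset.sum_congr rfl (fun i _ => by rw [hz2 i])]
    have e0 : (1 : Fin (sz+2)).succAbove 0 = 0 := rfl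
    have hsub : (M.submatrix Fin.succ ((1 : Fin (sz+2)).succAbove)).submatrix
        ((0 : Fin (sz+1)).succAbove) Fin.succ
        = M.submatrix (Fin.succ ∘ Fin.succ) (Fin.succ ∘ Fin.succ) := by
      ext i j
      simp [Matrix.submatrix_apply, Fin.zero_succAbove, Fin.one_succAbove_succ]
    simp only [Matrix.submatrix_apply, e0, hsub]
    simp
  rw [Finset.sum_congr rfl (fun j _ => by rw [hz j])]
  have es : Fin.succ (0 : Fin (sz+1)) = 1 := rfl
  simp only [Fin.succAbove_zero, es]
  rw [h1]
  simp [Fin.val_zero, Fin.val_one]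
  ring

lemma Ttri_sub1 {n : ℕ} (lam : ZMod n → Fin 2 → ℂ) (s sz : ℕ) :
    (Ttri lam s (sz+2)).submatrix Fin.succ Fin.succ = Ttri lam (s+1) (sz+1) := by
  ext i j
  simp only [Matrix.submatrix_apply, Ttri, Matrix.of_apply, Fin.val_succ, Fin.succ_inj]
  have e1 : ((i:ℕ) + 1 + s + 1 : ℕ) = ((i:ℕ) + (s+1) + 1 : ℕ) := by ring
  have e2 : ((j:ℕ) + 1 + s + 1 : ℕ) = ((j:ℕ) + (s+1) + 1 : ℕ) := by ring
  rw [e1, e2]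
  have e3 : ((j:ℕ) + 1 = (i:ℕ) + 1 + 1) ↔ ((j:ℕ) = (i:ℕ) + 1) := by omega
  have e4 : ((i:ℕ) + 1 = (j:ℕ) + 1 + 1) ↔ ((i:ℕ) = (j:ℕ) + 1) := by omega
  simp only [e3, e4]

lemma Ttri_sub2 {n : ℕ} (lam : ZMod n → Fin 2 → ℂ) (s sz : ℕ) :
    (Ttri lam s (sz+2)).submatrix (Fin.succ ∘ Fin.succ) (Fin.succ ∘ Fin.succ)
      = Ttri lam (s+2) sz := by
  ext i j
  simp only [Matrix.submatrix_apply, Function.comp_apply, Ttri, Matrix.of_apply, Fin.val_succ,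
    Fin.succ_inj]
  have e1 : ((i:ℕ) + 1 + 1 + s + 1 : ℕ) = ((i:ℕ) + (s+2) + 1 : ℕ) := by ring
  have e2 : ((j:ℕ) + 1 + 1 + s + 1 : ℕ) = ((j:ℕ) + (s+2) + 1 : ℕ) := by ring
  rw [e1, e2]
  have e3 : ((j:ℕ) + 1 + 1 = (i:ℕ) + 1 + 1 + 1) ↔ ((j:ℕ) = (i:ℕ) + 1) := by omega
  have e4 : ((i:ℕ) + 1 + 1 = (j:ℕ) + 1 + 1 + 1) ↔ ((i:ℕ) = (j:ℕ) + 1) := by omega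
  simp only [e3, e4]

lemma Ttri_rec {n : ℕ} (lam : ZMod n → Fin 2 → ℂ) (s sz : ℕ) :
    (Ttri lam s (sz+2)).det =
      (ang lam ((s+2 : ℕ) : ZMod n) ((s : ℕ) : ZMod n) /
          (ang lam ((s : ℕ) : ZMod n) ((s+1 : ℕ) : ZMod n) *
            ang lam ((s+1 : ℕ) : ZMod n) ((s+2 : ℕ) : ZMod n))) *
        (Ttri lam (s+1) (sz+1)).det -
      (1 / ang lam ((s+1 : ℕ) : ZMod n) ((s+2 : ℕ) : ZMod n)) ^ 2 *
        (Ttri lam (s+2) sz).det := by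
  have hc2 : ((((s+1:ℕ)) : ZMod n) + 1) = ((s+2 : ℕ) : ZMod n) := by push_cast; ring
  have hm1 : (((s+1:ℕ) : ZMod n) - 1) = ((s : ℕ) : ZMod n) := by push_cast; ring
  have hrow : ∀ j : Fin (sz+2), 2 ≤ (j:ℕ) → Ttri lam s (sz+2) 0 j = 0 := by
    intro j hj
    simp only [Ttri, Matrix.of_apply]
    rw [if_neg (by rintro rfl; simp at hj), if_neg (by simp only [Fin.val_zero]; omega),
      if_neg (by simp only [Fin.val_zero]; omega)]
  have hcol : ∀ i : Fin (sz+2), 2 ≤ (i:ℕ) → Ttri lam s (sz+2) i 0 = 0 := by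
    intro i hi
    simp only [Ttri, Matrix.of_apply]
    rw [if_neg (by rintro rfl; simp at hi), if_neg (by simp only [Fin.val_zero]; omega),
      if_neg (by simp only [Fin.val_zero]; omega)]
  rw [det_expand' _ hrow hcol, Ttri_sub1, Ttri_sub2]
  have e00 : Ttri lam s (sz+2) 0 0 =
      ang lam ((s+2 : ℕ) : ZMod n) ((s : ℕ) : ZMod n) /
        (ang lam ((s : ℕ) : ZMod n) ((s+1 : ℕ) : ZMod n) *
          ang lam ((s+1 : ℕ) : ZMod n) ((s+2 : ℕ) : ZMod n)) := by
    simp only [Ttri, Matrix.of_apply, Fin.val_zero, Nat.zero_add]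
    rw [if_pos trivial, hc2, hm1]
  have e01 : Ttri lam s (sz+2) 0 1 = 1 / ang lam ((s+1 : ℕ) : ZMod n) ((s+2 : ℕ) : ZMod n) := by
    simp only [Ttri, Matrix.of_apply, Fin.val_zero, Fin.val_one, Nat.zero_add]
    rw [if_neg (by simp [Fin.ext_iff]), if_pos trivial, hc2]
  have e10 : Ttri lam s (sz+2) 1 0 = 1 / ang lam ((s+1 : ℕ) : ZMod n) ((s+2 : ℕ) : ZMod n) := by
    simp only [Ttri, Matrix.of_apply, Fin.val_zero, Fin.val_one, Nat.zero_add]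
    rw [if_neg (by simp [Fin.ext_iff]), if_neg (by omega), if_pos trivial, hc2]
  rw [e00, e01, e10]
  ring

lemma alg2 (a b p q r t : ℂ) (hp : p ≠ 0) (hq : q ≠ 0) (ht : t ≠ 0)
    (hs : a * q + b * r - t * p = 0) :
    r / (p * q) * ((-1:ℂ) ^ (1 - 1) * b / (q * t)) - (1 / q) ^ 2 * 1
      = (-1:ℂ) ^ (2 - 1) * a / (p * q * t) := by
  norm_num
  field_simp
  linear_combination hs

lemma alg3 (e a b c p q r P : ℂ) (hp : p ≠ 0) (hq : q ≠ 0) (hP : P ≠ 0)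
    (hs : a * q + b * r + c * p = 0) :
    r / (p * q) * (-e * b / (q * P)) - (1 / q) ^ 2 * (e * c / P)
      = e * a / (p * (q * P)) := by
  field_simp
  linear_combination (-e) * hs

/-- The determinants of the matrices `Q^{(n-i)}` satisfy the recursion
`det Q^{(n−m)} = A·det Q^{(n−m+1)} − B²·det Q^{(n−m+2)}` with
`A = ⟨n−m+2,n−m⟩/(⟨n−m,n−m+1⟩⟨n−m+1,n−m+2⟩)`, `B = 1/⟨n−m+1,n−m+2⟩`, and the closed form
`det Q^{(n−i)} = (−1)^{i−1} ⟨1,n−i⟩ / (⟨n−i,n−i+1⟩⟨n−i+1,n−i+2⟩⋯⟨n,1⟩)`. -/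
theorem det_Qdel {n : ℕ} [NeZero n] (hn : 2 ≤ n) (lam : ZMod n → Fin 2 → ℂ)
    (hang : ∀ i : ZMod n, ang lam i (i + 1) ≠ 0) :
    (∀ m : ℕ, 2 ≤ m → m < n →
      (Qdel lam (n - m)).det =
        (ang lam ((n - m + 2 : ℕ) : ZMod n) ((n - m : ℕ) : ZMod n) /
            (ang lam ((n - m : ℕ) : ZMod n) ((n - m + 1 : ℕ) : ZMod n) *
              ang lam ((n - m + 1 : ℕ) : ZMod n) ((n - m + 2 : ℕ) : ZMod n))) *
          (Qdel lam (n - m + 1)).det -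
        (1 / ang lam ((n - m + 1 : ℕ) : ZMod n) ((n - m + 2 : ℕ) : ZMod n)) ^ 2 *
          (Qdel lam (n - m + 2)).det) ∧
    (∀ i : ℕ, 0 < i → i < n →
      (Qdel lam (n - i)).det =
        (-1 : ℂ) ^ (i - 1) * ang lam (1 : ZMod n) ((n - i : ℕ) : ZMod n) /
          ∏ j ∈ Finset.range (i + 1),
            ang lam ((n - i + j : ℕ) : ZMod n) ((n - i + j + 1 : ℕ) : ZMod n)) := by
  -- nonzeroness of consecutive brackets, in nat-cast form
  have hang' : ∀ k : ℕ, ang lam ((k : ℕ) : ZMod n) ((k+1 : ℕ) : ZMod n) ≠ 0 := by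
    intro k
    have : ((k+1 : ℕ) : ZMod n) = ((k : ℕ) : ZMod n) + 1 := by push_cast; ring
    rw [this]; exact hang _
  -- the recursion
  have key : ∀ m : ℕ, 2 ≤ m → m < n →
      (Qdel lam (n - m)).det =
        (ang lam ((n - m + 2 : ℕ) : ZMod n) ((n - m : ℕ) : ZMod n) /
            (ang lam ((n - m : ℕ) : ZMod n) ((n - m + 1 : ℕ) : ZMod n) *
              ang lam ((n - m + 1 : ℕ) : ZMod n) ((n - m + 2 : ℕ) : ZMod n))) *
          (Qdel lam (n - m + 1)).det -
        (1 / ang lam ((n - m + 1 : ℕ) : ZMod n) ((n - m + 2 : ℕ) : ZMod n)) ^ 2 *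
          (Qdel lam (n - m + 2)).det := by
    intro m h2 hmn
    have s1 : (Qdel lam (n - m)).det = (Ttri lam (n - m) ((m-2)+2)).det :=
      det_Ttri_congr lam (n - m) (by omega)
    have s2 : (Ttri lam (n - m + 1) ((m-2)+1)).det = (Qdel lam (n - m + 1)).det :=
      det_Ttri_congr lam (n - m + 1) (by omega)
    have s3 : (Ttri lam (n - m + 2) (m-2)).det = (Qdel lam (n - m + 2)).det :=
      det_Ttri_congr lam (n - m + 2) (by omega)
    rw [s1, Ttri_rec, s2, s3]
  refine ⟨key, ?_⟩
  intro i
  induction i using Nat.strong_induction_on with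
  | _ i IH =>
    intro hi0 hin
    rcases Nat.lt_or_ge i 2 with hi2 | hi2
    · -- base case i = 1
      have hi1 : i = 1 := by omega
      subst hi1
      have s1 : (Qdel lam (n - 1)).det = (Ttri lam (n - 1) 1).det :=
        det_Ttri_congr lam (n - 1) (by omega)
      rw [s1, Matrix.det_fin_one]
      have hnn : ((n : ℕ) : ZMod n) = 0 := ZMod.natCast_self n
      have hn1 : ((n - 1 + 1 : ℕ) : ZMod n) = 0 := by
        rw [show n - 1 + 1 = n by omega]; exact hnn
      have hm1 : ((n - 1 : ℕ) : ZMod n) = -1 := by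
        have h : ((n - 1 : ℕ) : ZMod n) + 1 = 0 := by
          rw [show ((1:ZMod n)) = ((1:ℕ) : ZMod n) by push_cast; ring, ← Nat.cast_add, hn1]
        exact eq_neg_of_add_eq_zero_left h
      have hn2 : ((n - 1 + 1 + 1 : ℕ) : ZMod n) = 1 := by
        rw [show n - 1 + 1 + 1 = n + 1 by omega]; push_cast; rw [hnn]; ring
      simp only [Ttri, Matrix.of_apply, Fin.val_zero, Nat.zero_add]
      rw [if_pos trivial, hn1, Finset.prod_range_succ, Finset.prod_range_one]
      simp only [Nat.add_zero, hn1, hm1, hn2, pow_zero, zero_add, zero_sub, one_mul]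
      norm_num
    · -- step case: i ≥ 2
      rcases Nat.lt_or_ge i 3 with hi3 | hi3
      · -- i = 2
        have hi2' : i = 2 := by omega
        subst hi2'
        have hrec := key 2 (by omega) hin
        have h1 := IH 1 (by omega) (by omega) (by omega)
        rw [show n - 1 = n - 2 + 1 from by omega] at h1
        have hQn : (Qdel lam (n - 2 + 2)).det = 1 := by
          rw [Qdel_eq_Ttri, det_Ttri_congr lam (n-2+2) (show n - (n-2+2) = 0 from by omega),
            Matrix.det_fin_zero]
        rw [hrec, h1, hQn]
        -- expand the products
        simp only [Finset.prod_range_succ, Finset.prod_range_zero, one_mul, Nat.add_zero,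
          pow_zero, pow_one]
        have c0 : ((n - 2 + 1 + 1 : ℕ) : ZMod n) = 0 := by
          rw [show n - 2 + 1 + 1 = n from by omega]; exact ZMod.natCast_self n
        have c1 : ((n - 2 + 1 + 1 + 1 : ℕ) : ZMod n) = 1 := by
          rw [show n - 2 + 1 + 1 + 1 = n + 1 from by omega]; push_cast
          rw [ZMod.natCast_self n]; ring
        have c2 : ((n - 2 + 2 : ℕ) : ZMod n) = 0 := by
          rw [show n - 2 + 2 = n from by omega]; exact ZMod.natCast_self n
        simp only [c0, c1, c2]
        have hp := hang' (n-2)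
        have hq := hang' (n-2+1)
        rw [c0] at hq
        have ht : ang lam (0 : ZMod n) (1 : ZMod n) ≠ 0 := by
          have := hang 0; simpa using this
        have hs := schouten lam 1 (((n-2:ℕ) : ZMod n)) (((n-2+1:ℕ) : ZMod n)) 0
        have ha : ang lam (1 : ZMod n) (0 : ZMod n) = - ang lam (0:ZMod n) 1 := ang_anti lam 1 0
        have hs' : ang lam 1 (((n-2:ℕ)) : ZMod n) * ang lam (((n-2+1:ℕ)):ZMod n) 0
            + ang lam 1 (((n-2+1:ℕ)):ZMod n) * ang lam 0 (((n-2:ℕ)):ZMod n)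
            - ang lam 0 1 * ang lam (((n-2:ℕ)):ZMod n) (((n-2+1:ℕ)):ZMod n) = 0 := by
          linear_combination hs - ang lam (((n-2:ℕ)):ZMod n) (((n-2+1:ℕ)):ZMod n) * ha
        exact alg2 _ _ _ _ _ _ hp hq ht hs'
      · -- i ≥ 3
        obtain ⟨l, rfl⟩ : ∃ l, i = l + 3 := ⟨i - 3, by omega⟩
        have hrec := key (l+3) (by omega) hin
        have h1 := IH (l+2) (by omega) (by omega) (by omega)
        have h2 := IH (l+1) (by omega) (by omega) (by omega)
        rw [show n - (l+2) = n - (l+3) + 1 from by omega] at h1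
        rw [show n - (l+1) = n - (l+3) + 2 from by omega] at h2
        rw [hrec, h1, h2]
        simp only [show l+3-1 = l+2 from rfl, show l+2-1 = l+1 from rfl,
          show l+1-1 = l from rfl]
        have p2 : (-1:ℂ)^(l+2) = (-1:ℂ)^l := by rw [pow_add]; norm_num
        have p1 : (-1:ℂ)^(l+1) = -((-1:ℂ)^l) := by rw [pow_add]; norm_num
        rw [p2, p1]
        have hA : (∏ j ∈ Finset.range (l+3+1),
              ang lam ((n-(l+3)+j : ℕ) : ZMod n) ((n-(l+3)+j+1 : ℕ) : ZMod n))
            = ang lam ((n-(l+3) : ℕ) : ZMod n) ((n-(l+3)+1 : ℕ) : ZMod n) *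
              ∏ j ∈ Finset.range (l+2+1),
                ang lam ((n-(l+3)+1+j : ℕ) : ZMod n) ((n-(l+3)+1+j+1 : ℕ) : ZMod n) := by
          rw [Finset.prod_range_succ', mul_comm]
          apply congrArg₂ (· * ·) rfl
          refine Finset.prod_congr rfl fun x _ => ?_
          rw [show n-(l+3)+(x+1) = n-(l+3)+1+x from by omega]
        have hB : (∏ j ∈ Finset.range (l+2+1),
              ang lam ((n-(l+3)+1+j : ℕ) : ZMod n) ((n-(l+3)+1+j+1 : ℕ) : ZMod n))
            = ang lam ((n-(l+3)+1 : ℕ) : ZMod n) ((n-(l+3)+2 : ℕ) : ZMod n) *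
              ∏ j ∈ Finset.range (l+1+1),
                ang lam ((n-(l+3)+2+j : ℕ) : ZMod n) ((n-(l+3)+2+j+1 : ℕ) : ZMod n) := by
          rw [Finset.prod_range_succ', mul_comm]
          apply congrArg₂ (· * ·) (by rw [show n-(l+3)+1+0+1 = n-(l+3)+2 from by omega])
          refine Finset.prod_congr rfl fun x _ => ?_
          rw [show n-(l+3)+1+(x+1) = n-(l+3)+2+x from by omega]
        rw [hA, hB]
        have hp := hang' (n-(l+3))
        have hq := hang' (n-(l+3)+1)
        have hP : (∏ j ∈ Finset.range (l+1+1),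
              ang lam ((n-(l+3)+2+j : ℕ) : ZMod n) ((n-(l+3)+2+j+1 : ℕ) : ZMod n)) ≠ 0 :=
          Finset.prod_ne_zero_iff.mpr fun j _ => hang' (n-(l+3)+2+j)
        have hs := schouten lam 1 (((n-(l+3):ℕ)) : ZMod n) (((n-(l+3)+1:ℕ)) : ZMod n)
          (((n-(l+3)+2:ℕ)) : ZMod n)
        exact alg3 _ _ _ _ _ _ _ _ hp hq hP hs
end

section
/- Let [a,b,c,d,e] denote totally antisymmetric 5-brackets (vanishing when two labels coincide) satisfying the six-term relations ∂[abcdef] = 0, i.e. [bcdef] − [acdef] + [abdef] − [abcef] + [abcdf] − [abcde] = 0 for all labels. Then for any k, Σ_{s=3}^{k−2} Σ_{t=s+2}^{k} [1, s−1, s, t−1, t] = Σ_{s=2}^{k−3} Σ_{t=s+2}^{k−1} [k, s−1, s, t−1, t]. -/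
/-!
The six-term relation for the labels `1, s - 1, s, t - 1, t, k` trades `[1, s - 1, s, t - 1, t]`
for `[k, s - 1, s, t - 1, t]` plus one difference telescoping in `s` and one telescoping in `t`.
Summed over the triangle `s + 2 ≤ t`, both telescopes collapse (brackets containing `k` twice
vanish) to the row `s = 2` of the right-hand side; the remaining rows match term by term once the
vanishing column `t = k` is dropped.
-/

open Finset

namespace Finset

section AddCommMonoid

variable {M : Type*} [AddCommMonoid M]

theorem sum_Icc_add_right {α : Type*} [AddCommMonoid α] [PartialOrder α]
    [IsOrderedCancelAddMonoid α] [ExistsAddOfLE α] [LocallyFiniteOrder α] (F : α → M) (a b c : α) :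
    ∑ t ∈ Icc a b, F (t + c) = ∑ t ∈ Icc (a + c) (b + c), F t := by
  rw [← map_add_right_Icc, sum_map]
  rfl

theorem sum_Icc_sum_Icc_add_two_comm (X : ℤ → ℤ → M) (a b : ℤ) :
    ∑ s ∈ Icc a (b - 2), ∑ t ∈ Icc (s + 2) b, X s t =
      ∑ t ∈ Icc (a + 2) b, ∑ s ∈ Icc a (t - 2), X s t :=
  sum_comm' fun s t => by simp only [mem_Icc]; omega

theorem sum_Icc_sum_Icc_add_two_eq_of_eq_zero (X : ℤ → ℤ → M) (a b : ℤ)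
    (hX : ∀ s, X s b = 0) :
    ∑ s ∈ Icc a (b - 3), ∑ t ∈ Icc (s + 2) (b - 1), X s t =
      ∑ s ∈ Icc a (b - 2), ∑ t ∈ Icc (s + 2) b, X s t := by
  calc ∑ s ∈ Icc a (b - 3), ∑ t ∈ Icc (s + 2) (b - 1), X s t
      = ∑ s ∈ Icc a (b - 2), ∑ t ∈ Icc (s + 2) (b - 1), X s t :=
        sum_subset (Icc_subset_Icc_right (by omega)) fun s hs hs' => by
          rw [Icc_eq_empty (by simp only [mem_Icc] at hs hs'; omega), sum_empty]
    _ = ∑ s ∈ Icc a (b - 2), ∑ t ∈ Icc (s + 2) b, X s t :=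
        sum_congr rfl fun s _ => sum_subset (Icc_subset_Icc_right (by omega)) fun t ht ht' => by
          obtain rfl : t = b := by simp only [mem_Icc] at ht ht'; omega
          exact hX s

end AddCommMonoid

section AddCommGroup

variable {M : Type*} [AddCommGroup M]

theorem sum_Icc_int_telescope (F : ℤ → M) {a b : ℤ} (h : a - 1 ≤ b) :
    ∑ t ∈ Icc a b, (F (t - 1) - F t) = F (a - 1) - F b := by
  induction b, h using Int.leInduction with
  | base => simp
  | succ n hn ih =>
    rw [← sum_Ico_add_eq_sum_Icc (by omega), Ico_add_one_right_eq_Icc, ih, add_sub_cancel_right]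
    abel

theorem sum_Icc_sum_Icc_add_two_telescope_right (H : ℤ → ℤ → M) (a b : ℤ) :
    ∑ s ∈ Icc a (b - 2), ∑ t ∈ Icc (s + 2) b, (H s (t - 1) - H s t) =
      ∑ s ∈ Icc a (b - 2), (H s (s + 1) - H s b) :=
  sum_congr rfl fun s hs => by
    rw [sum_Icc_int_telescope _ (by rw [mem_Icc] at hs; omega), show s + 2 - 1 = s + 1 by ring]

theorem sum_Icc_sum_Icc_add_two_telescope_left (G : ℤ → ℤ → M) (a b : ℤ) :
    ∑ s ∈ Icc a (b - 2), ∑ t ∈ Icc (s + 2) b, (G t (s - 1) - G t s) =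
      ∑ t ∈ Icc (a + 2) b, (G t (a - 1) - G t (t - 2)) := by
  rw [sum_Icc_sum_Icc_add_two_comm]
  exact sum_congr rfl fun t ht => sum_Icc_int_telescope _ (by rw [mem_Icc] at ht; omega)

end AddCommGroup

end Finset

section Brackets

variable {V : Type*} [AddCommGroup V] (f : (Fin 5 → ℤ) → V)

theorem bracket_rotate
    (hA : ∀ (g : Fin 5 → ℤ) (σ : Equiv.Perm (Fin 5)), f (g ∘ σ) = (Equiv.Perm.sign σ : ℤ) • f g)
    (a b c d e : ℤ) : f ![a, b, c, d, e] = f ![e, a, b, c, d] := by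
  have hσ : Equiv.Perm.sign (finRotate 5) = 1 := by
    rw [sign_finRotate]; decide
  have hg : ![e, a, b, c, d] ∘ finRotate 5 = ![a, b, c, d, e] := by
    funext i; fin_cases i <;> rfl
  simpa [hg, hσ] using hA ![e, a, b, c, d] (finRotate 5)

theorem bracket_exchange
    (hA : ∀ (g : Fin 5 → ℤ) (σ : Equiv.Perm (Fin 5)), f (g ∘ σ) = (Equiv.Perm.sign σ : ℤ) • f g)
    (hSix : ∀ a b c d e x : ℤ,
      f ![b, c, d, e, x] - f ![a, c, d, e, x] + f ![a, b, d, e, x]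
        - f ![a, b, c, e, x] + f ![a, b, c, d, x] - f ![a, b, c, d, e] = 0)
    (a b c d e x : ℤ) :
    f ![a, b, c, d, e] = f ![x, b, c, d, e] + (f ![a, b, d, e, x] - f ![a, c, d, e, x]) +
      (f ![a, b, c, d, x] - f ![a, b, c, e, x]) := by
  have h := hSix a b c d e x
  rw [bracket_rotate f hA b c d e x] at h
  rw [eq_comm, ← sub_eq_zero, ← h]
  abel

theorem bracket_eq_zero_of_apply_eq (hRep : ∀ g : Fin 5 → ℤ, ¬Function.Injective g → f g = 0)
    {g : Fin 5 → ℤ} {i j : Fin 5} (hij : i ≠ j) (h : g i = g j) : f g = 0 :=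
  hRep g fun hg => hij (hg h)

theorem sum_bracket_exchange_remainder (hRep : ∀ g : Fin 5 → ℤ, ¬Function.Injective g → f g = 0)
    {a k : ℤ} (hk : a + 3 ≤ k) :
    ∑ s ∈ Icc (a + 2) (k - 2), ∑ t ∈ Icc (s + 2) k,
        ((f ![a, s - 1, t - 1, t, k] - f ![a, s, t - 1, t, k]) +
          (f ![a, s - 1, s, t - 1, k] - f ![a, s - 1, s, t, k])) =
      ∑ t ∈ Icc (a + 3) k, f ![a, a + 1, t - 1, t, k] := by
  have hkk : ∀ x y, f ![a, x, y, k, k] = 0 := fun x y =>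
    bracket_eq_zero_of_apply_eq f hRep (i := 3) (j := 4) (by decide) rfl
  have hshift : ∑ s ∈ Icc (a + 2) (k - 2), f ![a, s - 1, s, s + 1, k] =
      ∑ t ∈ Icc (a + 4) k, f ![a, t - 1 - 2, t - 1 - 1, t - 1, k] := by
    have h :=
      sum_Icc_add_right (fun t => f ![a, t - 1 - 2, t - 1 - 1, t - 1, k]) (a + 2) (k - 2) 2
    rw [show a + 2 + 2 = a + 4 by ring, sub_add_cancel] at h
    rw [← h]
    exact sum_congr rfl fun s _ => by ring_nf
  rw [sum_congr rfl fun s _ => sum_add_distrib, sum_add_distrib,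
    sum_Icc_sum_Icc_add_two_telescope_left (fun t s => f ![a, s, t - 1, t, k]),
    sum_Icc_sum_Icc_add_two_telescope_right (fun s t => f ![a, s - 1, s, t, k])]
  simp only [hkk, sub_zero, show a + 2 - 1 = a + 1 by ring, show a + 2 + 2 = a + 4 by ring]
  calc _ = ∑ t ∈ Icc (a + 4) k, f ![a, a + 1, t - 1, t, k] +
        ∑ t ∈ Icc (a + 4) k,
          (f ![a, t - 1 - 2, t - 1 - 1, t - 1, k] - f ![a, t - 2, t - 1, t, k]) := by
        rw [hshift, sum_sub_distrib, sum_sub_distrib]; abel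
    _ = f ![a, a + 1, a + 3 - 1, a + 3, k] +
        ∑ t ∈ Icc (a + 3 + 1) k, f ![a, a + 1, t - 1, t, k] := by
        rw [sum_Icc_int_telescope (fun t => f ![a, t - 2, t - 1, t, k]) (by omega),
          hkk, sub_zero, add_comm, show a + 3 + 1 = a + 4 by ring]
        ring_nf
    _ = _ := by
        rw [Icc_add_one_left_eq_Ioc]
        exact add_sum_Ioc_eq_sum_Icc (f := fun t => f ![a, a + 1, t - 1, t, k]) hk

theorem sum_bracket_anchor_first_eq_anchor_last
    (hA : ∀ (g : Fin 5 → ℤ) (σ : Equiv.Perm (Fin 5)), f (g ∘ σ) = (Equiv.Perm.sign σ : ℤ) • f g)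
    (hRep : ∀ g : Fin 5 → ℤ, ¬Function.Injective g → f g = 0)
    (hSix : ∀ a b c d e x : ℤ,
      f ![b, c, d, e, x] - f ![a, c, d, e, x] + f ![a, b, d, e, x]
        - f ![a, b, c, e, x] + f ![a, b, c, d, x] - f ![a, b, c, d, e] = 0)
    (a k : ℤ) :
    ∑ s ∈ Icc (a + 2) (k - 2), ∑ t ∈ Icc (s + 2) k, f ![a, s - 1, s, t - 1, t] =
      ∑ s ∈ Icc (a + 1) (k - 3), ∑ t ∈ Icc (s + 2) (k - 1), f ![k, s - 1, s, t - 1, t] := by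
  rcases lt_or_ge k (a + 3) with hk | hk
  · rw [Icc_eq_empty (by omega), Icc_eq_empty (by omega), sum_empty, sum_empty]
  rw [sum_Icc_sum_Icc_add_two_eq_of_eq_zero _ _ _ fun s =>
      bracket_eq_zero_of_apply_eq f hRep (i := 0) (j := 4) (by decide) rfl]
  conv_rhs => rw [← add_sum_Ioc_eq_sum_Icc (by omega), ← Icc_add_one_left_eq_Ioc,
    add_sub_cancel_right, show a + 1 + 1 = a + 2 by ring, show a + 1 + 2 = a + 3 by ring]
  calc _ = ∑ s ∈ Icc (a + 2) (k - 2), ∑ t ∈ Icc (s + 2) k, (f ![k, s - 1, s, t - 1, t] +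
          ((f ![a, s - 1, t - 1, t, k] - f ![a, s, t - 1, t, k]) +
            (f ![a, s - 1, s, t - 1, k] - f ![a, s - 1, s, t, k]))) :=
        sum_congr rfl fun s _ => sum_congr rfl fun t _ => by
          rw [← add_assoc]; exact bracket_exchange f hA hSix _ _ _ _ _ k
    _ = ∑ s ∈ Icc (a + 2) (k - 2), ∑ t ∈ Icc (s + 2) k, f ![k, s - 1, s, t - 1, t] +
          ∑ t ∈ Icc (a + 3) k, f ![a, a + 1, t - 1, t, k] := by
        rw [← sum_bracket_exchange_remainder f hRep hk, ← sum_add_distrib]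
        exact sum_congr rfl fun s _ => sum_add_distrib
    _ = _ := by
        rw [add_comm]
        exact congrArg (· + _) (sum_congr rfl fun t _ => bracket_rotate f hA _ _ _ _ _)

end Brackets

theorem R_invariant_second_identity_general (V : Type*) [AddCommGroup V]
    (f : (Fin 5 → ℤ) → V)
    (hA : ∀ (g : Fin 5 → ℤ) (σ : Equiv.Perm (Fin 5)),
      f (g ∘ σ) = (Equiv.Perm.sign σ : ℤ) • f g)
    (hRep : ∀ g : Fin 5 → ℤ, ¬Function.Injective g → f g = 0)
    (hSix : ∀ a b c d e x : ℤ,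
      f ![b, c, d, e, x] - f ![a, c, d, e, x] + f ![a, b, d, e, x]
        - f ![a, b, c, e, x] + f ![a, b, c, d, x] - f ![a, b, c, d, e] = 0)
    (k : ℤ) :
    ∑ s ∈ Finset.Icc 3 (k - 2), ∑ t ∈ Finset.Icc (s + 2) k, f ![1, s - 1, s, t - 1, t] =
      ∑ s ∈ Finset.Icc 2 (k - 3), ∑ t ∈ Finset.Icc (s + 2) (k - 1), f ![k, s - 1, s, t - 1, t] :=
  sum_bracket_anchor_first_eq_anchor_last f hA hRep hSix 1 k

/-- The second `R`-invariant identity: for totally antisymmetric 5-brackets `[a,b,c,d,e]`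
(vanishing on repeated labels) satisfying the six-term relations `∂[abcdef] = 0`, one has
`Σ_{s=3}^{k−2} Σ_{t=s+2}^{k} [1, s−1, s, t−1, t] = Σ_{s=2}^{k−3} Σ_{t=s+2}^{k−1} [k, s−1, s, t−1, t]`. -/
theorem R_invariant_second_identity (V : Type*) [AddCommGroup V] [Module ℂ V]
    (f : (Fin 5 → ℤ) → V)
    (hA : ∀ (g : Fin 5 → ℤ) (σ : Equiv.Perm (Fin 5)),
      f (g ∘ σ) = (Equiv.Perm.sign σ : ℤ) • f g)
    (hRep : ∀ g : Fin 5 → ℤ, ¬Function.Injective g → f g = 0)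
    (hSix : ∀ a b c d e x : ℤ,
      f ![b, c, d, e, x] - f ![a, c, d, e, x] + f ![a, b, d, e, x]
        - f ![a, b, c, e, x] + f ![a, b, c, d, x] - f ![a, b, c, d, e] = 0)
    (k : ℤ) :
    ∑ s ∈ Finset.Icc 3 (k - 2), ∑ t ∈ Finset.Icc (s + 2) k, f ![1, s - 1, s, t - 1, t] =
      ∑ s ∈ Finset.Icc 2 (k - 3), ∑ t ∈ Finset.Icc (s + 2) (k - 1), f ![k, s - 1, s, t - 1, t] :=
  R_invariant_second_identity_general V f hA hRep hSix k
end

section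
/- Let [a,b,c,d,e] be the NMHV five-bracket of momentum twistors, [abcde] = δ⁽⁴⁾(⟨bcde⟩η_a + ⟨cdea⟩η_b + ⟨deab⟩η_c + ⟨eabc⟩η_d + ⟨abcd⟩η_e) / (⟨bcde⟩⟨cdea⟩⟨deab⟩⟨eabc⟩⟨abcd⟩). If Z_y = w_x Z_x + w_a Z_a + w_b Z_b + w_c Z_c with w_x ≠ 0, then the residues of [abcdx] and [abcdy] at the pole ⟨abcd⟩ = 0 coincide; i.e. ⟨abcd⟩·([abcdx] − [abcdy]) vanishes on the locus ⟨abcd⟩ = 0. -/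
open MvPolynomial

/-- The 4-bracket `⟨abcd⟩ = det(Z_a Z_b Z_c Z_d)` of four momentum twistors. -/
noncomputable def fourBracket (a b c d : Fin 4 → ℂ) : ℂ :=
  Matrix.det (Matrix.of fun i j => ![a, b, c, d] j i)

/-- The numerator of the NMHV five-bracket: the Grassmann delta function
`δ⁽⁴⁾(⟨2345⟩η₁ + ⟨3451⟩η₂ + ⟨4512⟩η₃ + ⟨5123⟩η₄ + ⟨1234⟩η₅)`, with the Grassmann variables
of the five particles (carrying twistor labels `i₁,…,i₅` among six twistors) modelled as
formal (commuting) variables `X (i, A)`: the coefficients of the canonically ordered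
Grassmann monomials agree with those of this polynomial. -/
noncomputable def deltaNum (Z1 Z2 Z3 Z4 Z5 : Fin 4 → ℂ) (i1 i2 i3 i4 i5 : Fin 6) :
    MvPolynomial (Fin 6 × Fin 4) ℂ :=
  ∏ A : Fin 4,
    (C (fourBracket Z2 Z3 Z4 Z5) * X (i1, A) + C (fourBracket Z3 Z4 Z5 Z1) * X (i2, A)
      + C (fourBracket Z4 Z5 Z1 Z2) * X (i3, A) + C (fourBracket Z5 Z1 Z2 Z3) * X (i4, A)
      + C (fourBracket Z1 Z2 Z3 Z4) * X (i5, A))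

/-!
On the pole `⟨abcd⟩ = 0` the twistors `Z_a, Z_b, Z_c, Z_d` are linearly dependent, so every
bracket of four vectors from their span vanishes. Since `Z_y ≡ w_x Z_x` modulo that span and the
bracket is linear in each slot, every bracket made of `Z_y` and three of `Z_a, …, Z_d` is `w_x`
times the same bracket with `Z_x`. Hence on the pole the numerator and the remaining denominator
of `[abcdy]` are `w_x⁴` times those of `[abcdx]`; the `η_x`/`η_y` term drops out of both
numerators because its coefficient is `⟨abcd⟩`.
-/

open Submodule

theorem Matrix.det_eq_zero_of_rows_mem_span {R n : Type*} [CommRing R] [Fintype n]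
    [DecidableEq n] {M N : Matrix n n R} (hM : M.det = 0)
    (hN : ∀ i, N i ∈ span R (Set.range M)) : N.det = 0 := by
  choose B hB using fun i => (mem_span_range_iff_exists_fun R).mp (hN i)
  have hNBM : N = Matrix.of B * M := by
    ext i j
    simp [Matrix.mul_apply, ← hB i, Finset.sum_apply]
  rw [hNBM, Matrix.det_mul, hM, mul_zero]

theorem fourBracket_eq_det (a b c d : Fin 4 → ℂ) :
    fourBracket a b c d = (Matrix.of ![a, b, c, d]).det := by
  rw [fourBracket, ← Matrix.det_transpose]
  rfl

theorem fourBracket_rotate (a b c d : Fin 4 → ℂ) :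
    fourBracket b c d a = -fourBracket a b c d := by
  have hrot : Matrix.of ![b, c, d, a] = (Matrix.of ![a, b, c, d]).submatrix (finRotate 4) id := by
    ext i j
    fin_cases i <;> rfl
  rw [fourBracket_eq_det, fourBracket_eq_det, hrot, Matrix.det_permute, sign_finRotate]
  norm_num

theorem fourBracket_rotate_two (a b c d : Fin 4 → ℂ) :
    fourBracket c d a b = fourBracket a b c d := by
  rw [fourBracket_rotate b, fourBracket_rotate a, neg_neg]

theorem fourBracket_rotate_three (a b c d : Fin 4 → ℂ) :
    fourBracket d a b c = -fourBracket a b c d := by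
  rw [fourBracket_rotate c, fourBracket_rotate_two]

theorem fourBracket_smul_add_left (w : ℂ) (x u b c d : Fin 4 → ℂ) :
    fourBracket (w • x + u) b c d = w * fourBracket x b c d + fourBracket u b c d := by
  have hrow (v : Fin 4 → ℂ) :
      Matrix.of ![v, b, c, d] = (Matrix.of ![x, b, c, d]).updateRow 0 v := by
    ext i j
    fin_cases i <;> simp
  simp only [fourBracket_eq_det]
  rw [hrow (w • x + u), hrow u, Matrix.det_updateRow_add, Matrix.det_updateRow_smul, ← hrow x]

theorem fourBracket_eq_zero_of_mem_span {a b c d p q r s : Fin 4 → ℂ}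
    (habcd : fourBracket a b c d = 0) (hp : p ∈ span ℂ (Set.range ![a, b, c, d]))
    (hq : q ∈ span ℂ (Set.range ![a, b, c, d])) (hr : r ∈ span ℂ (Set.range ![a, b, c, d]))
    (hs : s ∈ span ℂ (Set.range ![a, b, c, d])) : fourBracket p q r s = 0 := by
  rw [fourBracket_eq_det] at habcd ⊢
  refine Matrix.det_eq_zero_of_rows_mem_span habcd fun i => ?_
  fin_cases i <;> assumption

theorem fourBracket_left_eq_mul_of_sub_mem_span {a b c d x y p q r : Fin 4 → ℂ} {w : ℂ}
    (habcd : fourBracket a b c d = 0) (hy : y - w • x ∈ span ℂ (Set.range ![a, b, c, d]))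
    (hp : p ∈ span ℂ (Set.range ![a, b, c, d])) (hq : q ∈ span ℂ (Set.range ![a, b, c, d]))
    (hr : r ∈ span ℂ (Set.range ![a, b, c, d])) :
    fourBracket y p q r = w * fourBracket x p q r := by
  rw [← add_sub_cancel (w • x) y, fourBracket_smul_add_left,
    fourBracket_eq_zero_of_mem_span habcd hy hp hq hr, add_zero]

theorem deltaNum_eq_C_pow_mul {Z1 Z2 Z3 Z4 Z5 Z5' : Fin 4 → ℂ} {w : ℂ}
    (h1234 : fourBracket Z1 Z2 Z3 Z4 = 0)
    (h2345 : fourBracket Z2 Z3 Z4 Z5' = w * fourBracket Z2 Z3 Z4 Z5)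
    (h3451 : fourBracket Z3 Z4 Z5' Z1 = w * fourBracket Z3 Z4 Z5 Z1)
    (h4512 : fourBracket Z4 Z5' Z1 Z2 = w * fourBracket Z4 Z5 Z1 Z2)
    (h5123 : fourBracket Z5' Z1 Z2 Z3 = w * fourBracket Z5 Z1 Z2 Z3)
    (i1 i2 i3 i4 i5 j5 : Fin 6) :
    deltaNum Z1 Z2 Z3 Z4 Z5' i1 i2 i3 i4 i5 =
      C (w ^ 4) * deltaNum Z1 Z2 Z3 Z4 Z5 i1 i2 i3 i4 j5 := by
  rw [deltaNum, deltaNum, h1234, h2345, h3451, h4512, h5123, map_pow, ← Fin.prod_const,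
    ← Finset.prod_mul_distrib]
  refine Finset.prod_congr rfl fun A _ => ?_
  simp only [map_mul, map_zero]
  ring

theorem residues_match_at_pole_general (Za Zb Zc Zd Zx Zy : Fin 4 → ℂ) (wx wa wb wc : ℂ)
    (hZy : Zy = wx • Zx + wa • Za + wb • Zb + wc • Zc)
    (habcd : fourBracket Za Zb Zc Zd = 0) :
    deltaNum Za Zb Zc Zd Zx 0 1 2 3 4 *
        C (fourBracket Zb Zc Zd Zy * fourBracket Zc Zd Zy Za * fourBracket Zd Zy Za Zb *
            fourBracket Zy Za Zb Zc) =
      deltaNum Za Zb Zc Zd Zy 0 1 2 3 5 *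
        C (fourBracket Zb Zc Zd Zx * fourBracket Zc Zd Zx Za * fourBracket Zd Zx Za Zb *
            fourBracket Zx Za Zb Zc) := by
  set S := span ℂ (Set.range ![Za, Zb, Zc, Zd])
  obtain ⟨ha, hb, hc, hd⟩ : Za ∈ S ∧ Zb ∈ S ∧ Zc ∈ S ∧ Zd ∈ S :=
    ⟨subset_span ⟨0, rfl⟩, subset_span ⟨1, rfl⟩, subset_span ⟨2, rfl⟩, subset_span ⟨3, rfl⟩⟩
  have hy : Zy - wx • Zx ∈ S := by
    rw [hZy, add_assoc, add_assoc, add_sub_cancel_left]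
    exact add_mem (smul_mem _ _ ha) (add_mem (smul_mem _ _ hb) (smul_mem _ _ hc))
  have key {p q r : Fin 4 → ℂ} (hp : p ∈ S) (hq : q ∈ S) (hr : r ∈ S) :
      fourBracket Zy p q r = wx * fourBracket Zx p q r :=
    fourBracket_left_eq_mul_of_sub_mem_span habcd hy hp hq hr
  have h1 : fourBracket Zb Zc Zd Zy = wx * fourBracket Zb Zc Zd Zx := by
    rw [fourBracket_rotate Zy, fourBracket_rotate Zx, key hb hc hd, mul_neg]
  have h2 : fourBracket Zc Zd Zy Za = wx * fourBracket Zc Zd Zx Za := by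
    rw [fourBracket_rotate_two Zy, fourBracket_rotate_two Zx, key ha hc hd]
  have h3 : fourBracket Zd Zy Za Zb = wx * fourBracket Zd Zx Za Zb := by
    rw [fourBracket_rotate_three Zy, fourBracket_rotate_three Zx, key ha hb hd, mul_neg]
  have h4 : fourBracket Zy Za Zb Zc = wx * fourBracket Zx Za Zb Zc := key ha hb hc
  rw [deltaNum_eq_C_pow_mul habcd h1 h2 h3 h4 0 1 2 3 5 4, h1, h2, h3, h4]
  simp only [map_mul, map_pow]
  ring

/-- If `Z_y = w_x Z_x + w_a Z_a + w_b Z_b + w_c Z_c` with `w_x ≠ 0`, then on the locus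
`⟨abcd⟩ = 0` the residues of `[abcdx]` and `[abcdy]` at the pole `⟨abcd⟩` coincide: clearing
denominators, the numerator of `[abcdx]` times the remaining denominator brackets of
`[abcdy]` equals the numerator of `[abcdy]` times the remaining denominator brackets of
`[abcdx]` (at the level of the coefficient of each Grassmann monomial). -/
theorem residues_match_at_pole (Za Zb Zc Zd Zx Zy : Fin 4 → ℂ) (wx wa wb wc : ℂ)
    (hwx : wx ≠ 0) (hZy : Zy = wx • Zx + wa • Za + wb • Zb + wc • Zc)
    (habcd : fourBracket Za Zb Zc Zd = 0) :
    deltaNum Za Zb Zc Zd Zx 0 1 2 3 4 *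
        C (fourBracket Zb Zc Zd Zy * fourBracket Zc Zd Zy Za * fourBracket Zd Zy Za Zb *
            fourBracket Zy Za Zb Zc) =
      deltaNum Za Zb Zc Zd Zy 0 1 2 3 5 *
        C (fourBracket Zb Zc Zd Zx * fourBracket Zc Zd Zx Za * fourBracket Zd Zx Za Zb *
            fourBracket Zx Za Zb Zc) :=
  residues_match_at_pole_general Za Zb Zc Zd Zx Zy wx wa wb wc hZy habcd
end

section
/- Let c ∈ ℂ⁶ and Z_1,…,Z_6 ∈ ℂ⁴ satisfy Σ_i c_i Z_i = 0 and the consecutive constraints ⟪i,i+1⟫ = 0 (indices mod 6), where ⟪ij⟫ = Z_i^T Ω Z_j with Ω the standard symplectic form. Suppose the cyclic orthogonality relations c_3⟪35⟫c_5 = c_2⟪26⟫c_6, c_4⟪46⟫c_6 = c_3⟪31⟫c_1, c_5⟪51⟫c_1 = c_4⟪42⟫c_2 hold and ⟪26⟫, ⟪31⟫, ⟨6123⟩ are nonzero. Then c_1 c_2 = (⟨3456⟩/⟨6123⟩) c_4 c_5, where ⟨ijkl⟩ = ⟪ij⟫⟪kl⟫ + ⟪ik⟫⟪lj⟫ + ⟪il⟫⟪jk⟫.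 -/
/-!
Pairing `∑ cᵢ Zᵢ = 0` with `Z₃` and with `Z₆` and using the consecutive constraints leaves two
three-term relations, `c₆⟪36⟫ + c₁⟪31⟫ + c₅⟪35⟫ = 0` and `c₃⟪36⟫ + c₂⟪26⟫ + c₄⟪46⟫ = 0`, while
the constraints collapse the 4-brackets to `⟨3456⟩ = ⟪35⟫⟪64⟫` and `⟨6123⟩ = ⟪62⟫⟪31⟫`,
so the claim reads `c₁⟪31⟫ · c₂⟪26⟫ = c₅⟪35⟫ · c₄⟪46⟫`. The first two orthogonality relations
show that both `c₃` and `c₆` annihilate `c₁⟪31⟫ · c₂⟪26⟫ - c₅⟪35⟫ · c₄⟪46⟫`; if `c₃ = c₆ = 0`,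
the three-term relations make it vanish.
-/

/-- The standard symplectic form `Ω` on `ℂ⁴`, with block form `[[0,-I],[I,0]]`. -/
noncomputable def OmegaMat : Matrix (Fin 4) (Fin 4) ℂ :=
  !![0, 0, -1, 0; 0, 0, 0, -1; 1, 0, 0, 0; 0, 1, 0, 0]

/-- The symplectic 2-bracket `⟪ij⟫ = Z_i^A Z_j^B Ω_{AB}` of two momentum twistors. -/
noncomputable def dbr (Zi Zj : Fin 4 → ℂ) : ℂ :=
  ∑ A : Fin 4, ∑ B : Fin 4, Zi A * Zj B * OmegaMat A B

/-- The 4-bracket expressed through 2-brackets: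
`⟨ijkl⟩ = ⟪ij⟫⟪kl⟫ + ⟪ik⟫⟪lj⟫ + ⟪il⟫⟪jk⟫`. -/
noncomputable def br4 (Zi Zj Zk Zl : Fin 4 → ℂ) : ℂ :=
  dbr Zi Zj * dbr Zk Zl + dbr Zi Zk * dbr Zl Zj + dbr Zi Zl * dbr Zj Zk

theorem dbr_eq (X Y : Fin 4 → ℂ) :
    dbr X Y = X 2 * Y 0 + X 3 * Y 1 - X 0 * Y 2 - X 1 * Y 3 := by
  simp only [dbr, OmegaMat, Matrix.of_apply, Matrix.cons_val', Matrix.cons_val_fin_one,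
    Fin.sum_univ_four, Matrix.cons_val_zero, Matrix.cons_val_one, Matrix.cons_val, mul_zero,
    add_zero, mul_neg, mul_one, zero_add]
  ring

theorem dbr_anticomm (X Y : Fin 4 → ℂ) : dbr X Y = -dbr Y X := by
  rw [dbr_eq, dbr_eq]; ring

theorem dbr_self (X : Fin 4 → ℂ) : dbr X X = 0 := by
  rw [dbr_eq]; ring

theorem dbr_sum_smul_right {ι : Type*} (s : Finset ι) (X : Fin 4 → ℂ) (c : ι → ℂ)
    (Y : ι → Fin 4 → ℂ) : dbr X (∑ i ∈ s, c i • Y i) = ∑ i ∈ s, c i * dbr X (Y i) := by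
  simp only [dbr_eq, Finset.sum_apply, Pi.smul_apply, smul_eq_mul, Finset.mul_sum,
    ← Finset.sum_add_distrib, ← Finset.sum_sub_distrib]
  exact Finset.sum_congr rfl fun i _ => by ring

theorem br4_eq_of_dbr_eq_zero {X Y Z W : Fin 4 → ℂ} (hXY : dbr X Y = 0) (hYZ : dbr Y Z = 0) :
    br4 X Y Z W = dbr X Z * dbr W Y := by
  simp [br4, hXY, hYZ]

theorem mul_eq_mul_of_pairing_relations {R : Type*} [CommRing R] [NoZeroDivisors R]
    {s t r u v w x : R} (hu : t * r + u + v = 0) (hw : s * r + w + x = 0)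
    (hsv : s * v = t * w) (htx : t * x = s * u) : u * w = v * x := by
  rw [← sub_eq_zero]
  by_cases hs : s = 0
  · by_cases ht : t = 0
    · subst hs ht
      linear_combination w * hu - v * hw
    · refine (mul_eq_zero.mp ?_).resolve_left ht
      linear_combination -u * hsv - v * htx
  · refine (mul_eq_zero.mp ?_).resolve_left hs
    linear_combination -w * htx - x * hsv

theorem c1c2_eq_ratio_c4c5_general (Z : ZMod 6 → Fin 4 → ℂ) (c : ZMod 6 → ℂ)
    (hcZ : ∑ i : ZMod 6, c i • Z i = 0)
    (hcons : ∀ i : ZMod 6, dbr (Z i) (Z (i + 1)) = 0)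
    (h1 : c 3 * dbr (Z 3) (Z 5) * c 5 = c 2 * dbr (Z 2) (Z 6) * c 6)
    (h2 : c 4 * dbr (Z 4) (Z 6) * c 6 = c 3 * dbr (Z 3) (Z 1) * c 1)
    (h6123 : br4 (Z 6) (Z 1) (Z 2) (Z 3) ≠ 0) :
    c 1 * c 2 = (br4 (Z 3) (Z 4) (Z 5) (Z 6) / br4 (Z 6) (Z 1) (Z 2) (Z 3)) * (c 4 * c 5) := by
  rw [show (6 : ZMod 6) = 0 from rfl] at h1 h2 h6123 ⊢
  obtain ⟨d01, d12, d23, d34, d45, d50⟩ : dbr (Z 0) (Z 1) = 0 ∧ dbr (Z 1) (Z 2) = 0 ∧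
      dbr (Z 2) (Z 3) = 0 ∧ dbr (Z 3) (Z 4) = 0 ∧ dbr (Z 4) (Z 5) = 0 ∧ dbr (Z 5) (Z 0) = 0 :=
    ⟨hcons 0, hcons 1, hcons 2, hcons 3, hcons 4, hcons 5⟩
  have hpair (j : ZMod 6) : c 0 * dbr (Z j) (Z 0) + c 1 * dbr (Z j) (Z 1) + c 2 * dbr (Z j) (Z 2)
      + c 3 * dbr (Z j) (Z 3) + c 4 * dbr (Z j) (Z 4) + c 5 * dbr (Z j) (Z 5) = 0 := by
    refine (Fin.sum_univ_six fun i : ZMod 6 => c i * dbr (Z j) (Z i)).symm.trans ?_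
    change ∑ i : ZMod 6, c i * dbr (Z j) (Z i) = 0
    rw [← dbr_sum_smul_right, hcZ]
    simp [dbr]
  have key := mul_eq_mul_of_pairing_relations (s := c 3) (t := c 0) (r := dbr (Z 3) (Z 0))
    (u := c 1 * dbr (Z 3) (Z 1)) (v := c 5 * dbr (Z 3) (Z 5))
    (w := c 2 * dbr (Z 2) (Z 0)) (x := c 4 * dbr (Z 4) (Z 0))
    (by linear_combination hpair 3 - c 2 * dbr_anticomm (Z 3) (Z 2) + c 2 * d23
          - c 3 * dbr_self (Z 3) - c 4 * d34)
    (by linear_combination -hpair 0 + c 0 * dbr_self (Z 0) + c 1 * d01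
          + c 2 * dbr_anticomm (Z 0) (Z 2) + c 3 * dbr_anticomm (Z 0) (Z 3)
          + c 4 * dbr_anticomm (Z 0) (Z 4) + c 5 * dbr_anticomm (Z 0) (Z 5) - c 5 * d50)
    (by linear_combination h1) (by linear_combination h2)
  rw [br4_eq_of_dbr_eq_zero d01 d12] at h6123 ⊢
  rw [br4_eq_of_dbr_eq_zero d34 d45, div_mul_eq_mul_div, eq_div_iff h6123]
  linear_combination -key + c 1 * c 2 * dbr (Z 3) (Z 1) * dbr_anticomm (Z 0) (Z 2)
    - c 4 * c 5 * dbr (Z 3) (Z 5) * dbr_anticomm (Z 0) (Z 4)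

/-- For the 6-point ABJM momentum twistor Grassmannian: if `Σ c_i Z_i = 0`, the consecutive
constraints `⟪i,i+1⟫ = 0` hold (indices mod 6), the three cyclic orthogonality relations hold,
and `⟪26⟫, ⟪31⟫, ⟨6123⟩` are nonzero, then `c₁ c₂ = (⟨3456⟩/⟨6123⟩) c₄ c₅`. -/
theorem c1c2_eq_ratio_c4c5 (Z : ZMod 6 → Fin 4 → ℂ) (c : ZMod 6 → ℂ)
    (hcZ : ∑ i : ZMod 6, c i • Z i = 0)
    (hcons : ∀ i : ZMod 6, dbr (Z i) (Z (i + 1)) = 0)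
    (h1 : c 3 * dbr (Z 3) (Z 5) * c 5 = c 2 * dbr (Z 2) (Z 6) * c 6)
    (h2 : c 4 * dbr (Z 4) (Z 6) * c 6 = c 3 * dbr (Z 3) (Z 1) * c 1)
    (h3 : c 5 * dbr (Z 5) (Z 1) * c 1 = c 4 * dbr (Z 4) (Z 2) * c 2)
    (h26 : dbr (Z 2) (Z 6) ≠ 0) (h31 : dbr (Z 3) (Z 1) ≠ 0)
    (h6123 : br4 (Z 6) (Z 1) (Z 2) (Z 3) ≠ 0) :
    c 1 * c 2 = (br4 (Z 3) (Z 4) (Z 5) (Z 6) / br4 (Z 6) (Z 1) (Z 2) (Z 3)) * (c 4 * c 5) :=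
  c1c2_eq_ratio_c4c5_general Z c hcZ hcons h1 h2 h6123
end
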